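/- Let (T_s)_{s∈S} be a bounded representation of a commutative monoid (S,+) on a Banach space E such that the operator T_{s₀} is quasi-compact for some s₀ ∈ S. Then the semigroup at infinity 𝒯_∞ associated with (T_s)_{s∈S} is non-empty and compact in the operator norm, and the projection at infinity P_∞ has finite rank. -/

import Mathlib

open Filter Topology

/-- The pre-order on a commutative monoid `S`: `s ≤ t` iff `t = s + r` for some `r ∈ S`. -/
def sgLE {S : Type*} [AddCommMonoid S] (s t : S) : Prop := ∃ r : S, t = s + r

/-- The semigroup at infinity with respect to the operator norm:
`𝒯_∞ = ⋂_{r ∈ S} closure {T_s : s ≥ r}`. -/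
def sgAtInfty {E : Type*} [NormedAddCommGroup E] [NormedSpace ℝ E]
    {S : Type*} [AddCommMonoid S] (T : S → E →L[ℝ] E) : Set (E →L[ℝ] E) :=
  ⋂ r : S, closure (T '' {s | sgLE r s})

/-- `P` is the neutral element of the semigroup at infinity (the projection at infinity). -/
def IsNeutralAtInfty {E : Type*} [NormedAddCommGroup E] [NormedSpace ℝ E]
    {S : Type*} [AddCommMonoid S] (T : S → E →L[ℝ] E) (P : E →L[ℝ] E) : Prop :=
  P ∈ sgAtInfty T ∧ ∀ A ∈ sgAtInfty T, P * A = A ∧ A * P = A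

/-- An operator is quasi-compact if some positive power is at distance `< 1` (in the operator
norm) from a compact operator. -/
def QuasiCompact {E : Type*} [NormedAddCommGroup E] [NormedSpace ℝ E] (A : E →L[ℝ] E) : Prop :=
  ∃ (K : E →L[ℝ] E) (n : ℕ), IsCompactOperator ⇑K ∧ 0 < n ∧ ‖A ^ n - K‖ < 1

/-!
Write `T_{s₀}^n = K + R` with `K` compact and `‖R‖ < 1`. Then `T_{s₀}^{nm} = C + R^m` with `C`
compact, so `T_{2nm s₀ + u} = T_{s₀}^{nm} T_u T_{s₀}^{nm}` lies within `O(‖R‖^m)` of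
`C T_u C`, and `{C B C : ‖B‖ ≤ M}` is totally bounded. Hence for every `ε` some tail
`{T_s : s ≥ r}` is covered by finitely many `ε`-balls. In the complete space `L(E)` this makes
`⋂_r closure {T_s : s ≥ r}` non-empty (a finer ultrafilter is Cauchy) and compact, and every
element of it is a norm limit of compact operators, hence compact; a compact projection has
finite rank.
-/

open Set Metric

section IntersectionOfClosures

variable {α ι : Type*} [PseudoMetricSpace α]

theorem TotallyBounded.exists_finite_subset_thickening {s : Set α} (hs : TotallyBounded s)
    {ε : ℝ} (hε : 0 < ε) : ∃ t : Set α, t.Finite ∧ s ⊆ thickening ε t := by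
  obtain ⟨t, ht, hst⟩ := Metric.totallyBounded_iff.mp hs ε hε
  exact ⟨t, ht, by rwa [thickening_eq_biUnion_ball]⟩

theorem isCompact_iInter_closure_of_forall_subset_thickening [CompleteSpace α] {A : ι → Set α}
    (hA : ∀ ε > 0, ∃ i, ∃ t : Set α, t.Finite ∧ A i ⊆ thickening ε t) :
    IsCompact (⋂ i, closure (A i)) := by
  refine (Metric.totallyBounded_iff.2 fun ε hε => ?_).isCompact_of_isClosed
    (isClosed_iInter fun _ => isClosed_closure)
  obtain ⟨i, t, ht, hAt⟩ := hA (ε / 2) (half_pos hε)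
  refine ⟨t, ht, ?_⟩
  rw [← thickening_eq_biUnion_ball]
  calc ⋂ i, closure (A i) ⊆ closure (A i) := iInter_subset _ i
    _ ⊆ cthickening (ε / 2) t :=
      (closure_mono hAt).trans (closure_thickening_subset_cthickening _ _)
    _ ⊆ thickening ε t := cthickening_subset_thickening' hε (half_lt_self hε) t

theorem nonempty_iInter_closure_of_forall_subset_thickening [CompleteSpace α] [Nonempty ι]
    {A : ι → Set α} (hdir : Directed (· ⊇ ·) A) (hne : ∀ i, (A i).Nonempty)
    (hA : ∀ ε > 0, ∃ i, ∃ t : Set α, t.Finite ∧ A i ⊆ thickening ε t) :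
    (⋂ i, closure (A i)).Nonempty := by
  have : (⨅ i, 𝓟 (A i)).NeBot :=
    iInf_neBot_of_directed' (hdir.mono_comp (g := 𝓟) _ fun _ _ => principal_mono.2)
      fun i => principal_neBot_iff.2 (hne i)
  let U := Ultrafilter.of (⨅ i, 𝓟 (A i))
  have hAU (i : ι) : A i ∈ U := le_principal_iff.1 ((Ultrafilter.of_le _).trans (iInf_le _ i))
  have hU : Cauchy (U : Filter α) := by
    refine Metric.cauchy_iff.2 ⟨U.neBot, fun ε hε => ?_⟩
    obtain ⟨i, t, ht, hAt⟩ := hA (ε / 2) (half_pos hε)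
    rw [thickening_eq_biUnion_ball] at hAt
    obtain ⟨y, -, hy⟩ := (Ultrafilter.finite_biUnion_mem_iff ht).1 (mem_of_superset (hAU i) hAt)
    refine ⟨ball y (ε / 2), hy, fun a ha b hb => ?_⟩
    linarith [dist_triangle_right a b y, mem_ball.1 ha, mem_ball.1 hb]
  obtain ⟨x, hx⟩ := CompleteSpace.complete hU
  exact ⟨x, mem_iInter.2 fun i => mem_closure_iff_ultrafilter.2 ⟨U, hAU i, hx⟩⟩

theorem iInter_closure_subset_closure_of_forall_subset_thickening {A : ι → Set α} {C : Set α}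
    (hA : ∀ ε > 0, ∃ i, A i ⊆ thickening ε C) : ⋂ i, closure (A i) ⊆ closure C := by
  rw [closure_eq_iInter_cthickening]
  refine subset_iInter₂ fun ε hε => ?_
  obtain ⟨i, hi⟩ := hA ε hε
  exact (iInter_subset _ i).trans
    ((closure_mono hi).trans (closure_thickening_subset_cthickening _ _))

end IntersectionOfClosures

theorem norm_mul_mul_sub_mul_mul_le {R : Type*} [NonUnitalSeminormedRing R] (X Y B : R) :
    ‖X * B * X - Y * B * Y‖ ≤ ‖X - Y‖ * ‖B‖ * (‖X‖ + ‖Y‖) := by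
  have h : X * B * X - Y * B * Y = (X - Y) * B * X + Y * B * (X - Y) := by noncomm_ring
  rw [h]
  calc ‖(X - Y) * B * X + Y * B * (X - Y)‖
      ≤ ‖X - Y‖ * ‖B‖ * ‖X‖ + ‖Y‖ * ‖B‖ * ‖X - Y‖ :=
        (norm_add_le _ _).trans (add_le_add (norm_mul₃_le ..) (norm_mul₃_le ..))
    _ = ‖X - Y‖ * ‖B‖ * (‖X‖ + ‖Y‖) := by ring

section CompactOperators

variable {𝕜 : Type*} [RCLike 𝕜]
  {E F G H : Type*} [NormedAddCommGroup E] [NormedSpace 𝕜 E] [NormedAddCommGroup F]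
  [NormedSpace 𝕜 F] [NormedAddCommGroup G] [NormedSpace 𝕜 G] [NormedAddCommGroup H]
  [NormedSpace 𝕜 H]

theorem isCompactOperator_pow_sub_pow_sub {K : E →L[𝕜] E} (hK : IsCompactOperator K)
    (A : E →L[𝕜] E) (m : ℕ) : IsCompactOperator (A ^ m - (A - K) ^ m) := by
  induction m with
  | zero => simpa using isCompactOperator_zero
  | succ k ih =>
    have h : A ^ (k + 1) - (A - K) ^ (k + 1) = (A ^ k - (A - K) ^ k) * A + (A - K) ^ k * K := by
      rw [pow_succ, pow_succ]; noncomm_ring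
    rw [h]
    exact (ih.comp_clm A).add (hK.clm_comp _)

theorem ContinuousLinearMap.norm_comp_le_of_image_closedBall_subset_thickening
    {D : E →L[𝕜] G} {L : H →L[𝕜] E} {t : Set E} {η c : ℝ} (hη : 0 ≤ η) (hc : 0 ≤ c)
    (hL : L '' closedBall 0 1 ⊆ thickening η t) (hD : ∀ y ∈ t, ‖D y‖ ≤ c) :
    ‖D ∘L L‖ ≤ ‖D‖ * η + c := by
  refine opNorm_le_of_unit_norm (by positivity) fun x hx => ?_
  obtain ⟨y, hy, hxy⟩ := mem_thickening_iff.1 (hL ⟨x, by simp [hx], rfl⟩)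
  calc ‖D (L x)‖ = ‖D (L x - y) + D y‖ := by rw [map_sub, sub_add_cancel]
    _ ≤ ‖D‖ * ‖L x - y‖ + c := (norm_add_le _ _).trans (add_le_add (D.le_opNorm _) (hD y hy))
    _ ≤ ‖D‖ * η + c := by
      gcongr
      exact (dist_eq_norm (L x) y ▸ hxy).le

theorem totallyBounded_image_comp_comp_closedBall {K : F →L[𝕜] G} {L : H →L[𝕜] E}
    (hK : IsCompactOperator K) (hL : IsCompactOperator L) (M : ℝ) :
    TotallyBounded ((fun B : E →L[𝕜] F => K ∘L B ∘L L) '' closedBall 0 M) := by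
  rw [Metric.totallyBounded_iff]
  intro ε hε
  obtain ⟨η, hη, hηε⟩ := exists_pos_mul_lt (half_pos hε) (‖K‖ * (2 * M))
  obtain ⟨t, ht, hLt⟩ := ((hL.isCompact_closure_image_closedBall (f := (L : H →ₗ[𝕜] E)) 1
    ).totallyBounded.subset subset_closure).exists_finite_subset_thickening hη
  have : Fintype t := ht.fintype
  -- the values of `K ∘L B` on the finite net `t` of `L (closedBall 0 1)`
  let Φ : (E →L[𝕜] F) → (t → G) := fun B y => K (B y)
  have hΦ : TotallyBounded (Φ '' closedBall 0 M) := by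
    refine (isCompact_univ_pi fun y : t =>
      hK.isCompact_closure_image_closedBall (f := (K : F →ₗ[𝕜] G)) (M * ‖(y : E)‖)
      ).totallyBounded.subset ?_
    rintro _ ⟨B, hB, rfl⟩ y -
    refine subset_closure ⟨B y, ?_, rfl⟩
    rw [mem_closedBall_zero_iff] at hB ⊢
    exact B.le_of_opNorm_le_of_le hB le_rfl
  obtain ⟨N, hNM, hN, hΦN⟩ := exists_subset_image_finite_and.1
    (finite_approx_of_totallyBounded hΦ (ε / 2) (half_pos hε))
  refine ⟨_, hN.image (fun B : E →L[𝕜] F => K ∘L B ∘L L), ?_⟩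
  rintro _ ⟨B, hB, rfl⟩
  obtain ⟨_, ⟨B', hB', rfl⟩, hBB'⟩ := mem_iUnion₂.1 (hΦN ⟨B, hB, rfl⟩)
  refine mem_iUnion₂.2 ⟨_, mem_image_of_mem _ hB', mem_ball.2 ?_⟩
  rw [mem_ball] at hBB'
  have hB' : ‖B'‖ ≤ M := mem_closedBall_zero_iff.1 (hNM hB')
  rw [mem_closedBall_zero_iff] at hB
  have hD : ‖K ∘L (B - B')‖ ≤ ‖K‖ * (2 * M) :=
    (K.opNorm_comp_le _).trans (by gcongr; linarith [norm_sub_le B B'])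
  have hnet : ∀ y ∈ t, ‖(K ∘L (B - B')) y‖ ≤ dist (Φ B) (Φ B') := fun y hy => by
    simpa [Φ, dist_eq_norm] using dist_le_pi_dist (Φ B) (Φ B') ⟨y, hy⟩
  show dist (K ∘L B ∘L L) (K ∘L B' ∘L L) < ε
  calc dist (K ∘L B ∘L L) (K ∘L B' ∘L L) = ‖(K ∘L (B - B')) ∘L L‖ := by
        rw [dist_eq_norm, ContinuousLinearMap.comp_sub, ContinuousLinearMap.sub_comp]; rfl
    _ ≤ ‖K ∘L (B - B')‖ * η + dist (Φ B) (Φ B') :=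
      (K ∘L (B - B')).norm_comp_le_of_image_closedBall_subset_thickening hη.le dist_nonneg
        hLt hnet
    _ < ε := by nlinarith

end CompactOperators

theorem IsCompactOperator.finiteDimensional_range_of_isIdempotentElem {𝕜 E : Type*}
    [NontriviallyNormedField 𝕜] [CompleteSpace 𝕜] [NormedAddCommGroup E] [NormedSpace 𝕜 E]
    {P : E →L[𝕜] E} (hP : IsCompactOperator P) (hPP : IsIdempotentElem P) :
    FiniteDimensional 𝕜 (LinearMap.range (P : E →ₗ[𝕜] E)) := by
  have hV : ∀ v ∈ LinearMap.range (P : E →ₗ[𝕜] E), P v ∈ LinearMap.range (P : E →ₗ[𝕜] E) :=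
    fun v _ => LinearMap.mem_range_self _ v
  have hid := (IsCompactOperator.restrict (f := (P : E →ₗ[𝕜] E)) hP hV
    (ContinuousLinearMap.IsIdempotentElem.isClosed_range hPP))
  have hres : ⇑((P : E →ₗ[𝕜] E).restrict hV) = id :=
    funext fun v => Subtype.ext <| (LinearMap.IsIdempotentElem.mem_range_iff
      (ContinuousLinearMap.IsIdempotentElem.toLinearMap hPP)).1 v.2
  exact FiniteDimensional.of_isCompactOperator_id (𝕜 := 𝕜) (hres ▸ hid)

section Representation

variable {S : Type*} [AddCommMonoid S]

theorem directed_image_setOf_sgLE {β : Type*} (T : S → β) :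
    Directed (· ⊇ ·) fun r => T '' {s | sgLE r s} := by
  intro r r'
  refine ⟨r + r', ?_, ?_⟩ <;> rintro _ ⟨s, ⟨w, rfl⟩, rfl⟩
  · exact ⟨_, ⟨r' + w, by rw [add_assoc]⟩, rfl⟩
  · exact ⟨_, ⟨r + w, by abel⟩, rfl⟩

theorem nonempty_image_setOf_sgLE {β : Type*} (T : S → β) (r : S) :
    (T '' {s | sgLE r s}).Nonempty :=
  ⟨T r, r, ⟨0, (add_zero r).symm⟩, rfl⟩

theorem map_nsmul_eq_pow {R : Type*} [Monoid R] {T : S → R}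
    (hTmul : ∀ s t : S, T (s + t) = T s * T t) (s : S) {n : ℕ} (hn : 0 < n) :
    T (n • s) = T s ^ n := by
  induction n, hn using Nat.le_induction with
  | base => simp
  | succ k _ ih => rw [succ_nsmul, hTmul, ih, pow_succ]

variable {E : Type*} [NormedAddCommGroup E] [NormedSpace ℝ E] {T : S → E →L[ℝ] E}

theorem exists_image_setOf_sgLE_subset_thickening (hTmul : ∀ s t : S, T (s + t) = T s * T t)
    {M : ℝ} (hM : ∀ s, ‖T s‖ ≤ M) {s₀ : S} (hqc : QuasiCompact (T s₀)) {ε : ℝ} (hε : 0 < ε) :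
    ∃ r : S, ∃ C : E →L[ℝ] E, IsCompactOperator C ∧
      T '' {s | sgLE r s} ⊆ thickening ε ((fun B => C ∘L B ∘L C) '' closedBall 0 M) := by
  obtain ⟨K, n, hK, hn, hq⟩ := hqc
  set R := T s₀ ^ n - K
  have hM0 : 0 ≤ M := (norm_nonneg _).trans (hM 0)
  have hlim : Tendsto (fun m : ℕ => ‖R‖ ^ m * (M * (2 * M + 1))) atTop (𝓝 0) := by
    simpa using (tendsto_pow_atTop_nhds_zero_of_lt_one (norm_nonneg R) hq).mul_const
      (M * (2 * M + 1))
  obtain ⟨m, hm, hmε⟩ := ((eventually_gt_atTop 0).and (hlim.eventually_lt_const hε)).exists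
  set X := T s₀ ^ (n * m)
  set C := X - R ^ m
  have hC : IsCompactOperator C := by
    simpa [C, X, R, pow_mul] using isCompactOperator_pow_sub_pow_sub hK (T s₀ ^ n) m
  refine ⟨(n * m + n * m) • s₀, C, hC, ?_⟩
  rintro _ ⟨_, ⟨u, rfl⟩, rfl⟩
  have hX : T ((n * m + n * m) • s₀ + u) = X * T u * X := by
    have hsplit : (n * m + n * m) • s₀ + u = (n * m) • s₀ + u + (n * m) • s₀ := by
      rw [add_nsmul]; abel
    rw [hsplit, hTmul, hTmul, map_nsmul_eq_pow hTmul s₀ (by positivity)]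
  have hXM : ‖X‖ ≤ M := by
    simpa only [X, map_nsmul_eq_pow hTmul s₀ (Nat.mul_pos hn hm)] using hM ((n * m) • s₀)
  have hXC : ‖X - C‖ ≤ ‖R‖ ^ m := by simpa [C] using norm_pow_le' R hm
  have hCM : ‖C‖ ≤ M + 1 := by
    calc ‖C‖ = ‖X - (X - C)‖ := by rw [sub_sub_cancel]
      _ ≤ ‖X‖ + ‖X - C‖ := norm_sub_le _ _
      _ ≤ M + 1 := add_le_add hXM (hXC.trans (pow_le_one₀ (norm_nonneg _) hq.le))
  refine mem_thickening_iff.2 ⟨C * T u * C, ⟨T u, mem_closedBall_zero_iff.2 (hM u), rfl⟩, ?_⟩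
  rw [hX, dist_eq_norm]
  calc ‖X * T u * X - C * T u * C‖ ≤ ‖X - C‖ * ‖T u‖ * (‖X‖ + ‖C‖) :=
        norm_mul_mul_sub_mul_mul_le _ _ _
    _ ≤ ‖R‖ ^ m * M * (M + (M + 1)) := by gcongr; exact hM u
    _ < ε := by linarith

end Representation

theorem statement8_general {E : Type*} [NormedAddCommGroup E] [NormedSpace ℝ E] [CompleteSpace E]
    {S : Type*} [AddCommMonoid S] (T : S → E →L[ℝ] E)
    (hTmul : ∀ s t : S, T (s + t) = T s * T t)
    (hbdd : ∃ M : ℝ, ∀ s : S, ‖T s‖ ≤ M)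
    (hqc : ∃ s₀ : S, QuasiCompact (T s₀)) :
    (sgAtInfty T).Nonempty ∧ IsCompact (sgAtInfty T) ∧
    ∀ P : E →L[ℝ] E, IsNeutralAtInfty T P →
      FiniteDimensional ℝ (LinearMap.range (P : E →ₗ[ℝ] E)) := by
  obtain ⟨M, hM⟩ := hbdd
  obtain ⟨s₀, hs₀⟩ := hqc
  have happrox := fun ε (hε : 0 < ε) => exists_image_setOf_sgLE_subset_thickening hTmul hM hs₀ hε
  have hfinite : ∀ ε > 0, ∃ r, ∃ t : Set (E →L[ℝ] E), t.Finite ∧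
      T '' {s | sgLE r s} ⊆ thickening ε t := by
    intro ε hε
    obtain ⟨r, C, hC, hr⟩ := happrox (ε / 2) (half_pos hε)
    obtain ⟨t, ht, hCt⟩ := (totallyBounded_image_comp_comp_closedBall hC hC M
      ).exists_finite_subset_thickening (half_pos hε)
    refine ⟨r, t, ht, hr.trans ((thickening_subset_of_subset _ hCt).trans ?_)⟩
    simpa using thickening_thickening_subset (ε / 2) (ε / 2) t
  have hcompactOp : sgAtInfty T ⊆ {X | IsCompactOperator X} := by
    refine (iInter_closure_subset_closure_of_forall_subset_thickening fun ε hε => ?_).trans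
      isClosed_setOfPred_isCompactOperator.closure_subset
    obtain ⟨r, C, hC, hr⟩ := happrox ε hε
    exact ⟨r, hr.trans (thickening_subset_of_subset ε
      (image_subset_iff.2 fun B _ => hC.comp_clm _))⟩
  refine ⟨nonempty_iInter_closure_of_forall_subset_thickening (directed_image_setOf_sgLE T)
      (nonempty_image_setOf_sgLE T) hfinite,
    isCompact_iInter_closure_of_forall_subset_thickening hfinite, fun P hP => ?_⟩
  exact (hcompactOp hP.1).finiteDimensional_range_of_isIdempotentElem (hP.2 P hP.1).1

/-- Let `(T_s)` be a bounded representation of a commutative monoid on a Banach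
space such that `T_{s₀}` is quasi-compact for some `s₀ ∈ S`. Then the semigroup at infinity is
non-empty and compact in the operator norm, and the projection at infinity has finite rank. -/
theorem statement8 {E : Type*} [NormedAddCommGroup E] [NormedSpace ℝ E] [CompleteSpace E]
    {S : Type*} [AddCommMonoid S] (T : S → E →L[ℝ] E)
    (hT0 : T 0 = 1) (hTmul : ∀ s t : S, T (s + t) = T s * T t)
    (hbdd : ∃ M : ℝ, ∀ s : S, ‖T s‖ ≤ M)
    (hqc : ∃ s₀ : S, QuasiCompact (T s₀)) :
    (sgAtInfty T).Nonempty ∧ IsCompact (sgAtInfty T) ∧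
    ∀ P : E →L[ℝ] E, IsNeutralAtInfty T P →
      FiniteDimensional ℝ (LinearMap.range (P : E →ₗ[ℝ] E)) :=
  statement8_general T hTmul hbdd hqc
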